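/- Let σ > 0, r > 0, 0 < δ < 1, and θ(s) = (σ²/2 + √(σ⁴/4 + 2σ² s))/σ². Define g(λ) = δθ(r) + (1-δ)θ(r+λ) - (δr + (1-δ)(r+λ)) · (δ(θ(r)-1)/r + (1-δ)(θ(r+λ)-1)/(r+λ)). Then g(λ) → -∞ as λ → ∞; in particular there exists λ₂ > 0 such that g(λ) < 0 for all λ > λ₂. -/

import Mathlib

open Real Set Filter

/-- The positive root `θ(r)` of `(1/2)σ²θ² - (1/2)σ²θ - r = 0`. -/
noncomputable def θfun (σ r : ℝ) : ℝ :=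
  (σ^2 / 2 + Real.sqrt (σ^4 / 4 + 2 * σ^2 * r)) / σ^2

/-- The verification-condition function for the two-point weighting distribution. -/
noncomputable def gfun (σ r δ lam : ℝ) : ℝ :=
  δ * θfun σ r + (1 - δ) * θfun σ (r + lam) -
    (δ * r + (1 - δ) * (r + lam)) *
      (δ * (θfun σ r - 1) / r + (1 - δ) * (θfun σ (r + lam) - 1) / (r + lam))

/-!
Since `θ(s) ≤ 1 + (√2/σ)√s` grows like `√s`, the function `θ(s) - A s` tends to `-∞` for every
`A > 0`. Dropping nonnegative terms from the subtracted product gives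
`g(λ) ≤ δ θ(r) + (1-δ) (θ(r+λ) - A (r+λ))` with `A = δ (θ(r) - 1)/r > 0`, and the right-hand
side tends to `-∞`.
-/

lemma tendsto_mul_sqrt_sub_mul_atBot (b : ℝ) {c : ℝ} (hc : 0 < c) :
    Tendsto (fun x => b * √x - c * x) atTop atBot := by
  have h : Tendsto (fun x => √x * (c * √x - b)) atTop atTop :=
    tendsto_sqrt_atTop.atTop_mul_atTop₀ <|
      tendsto_atTop_add_const_right _ (-b) (tendsto_sqrt_atTop.const_mul_atTop hc)
  refine (tendsto_neg_atTop_atBot.comp h).congr' ?_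
  filter_upwards [eventually_ge_atTop 0] with x hx
  simp only [Function.comp_apply]
  nlinarith [mul_self_sqrt hx]

lemma one_lt_θfun {σ s : ℝ} (hσ : 0 < σ) (hs : 0 < s) : 1 < θfun σ s := by
  have h : σ ^ 2 / 2 < √(σ ^ 4 / 4 + 2 * σ ^ 2 * s) :=
    (lt_sqrt (by positivity)).2 (by nlinarith [mul_pos (pow_pos hσ 2) hs])
  rw [θfun, lt_div_iff₀ (by positivity)]
  linarith

lemma θfun_le {σ s : ℝ} (hσ : 0 < σ) (hs : 0 ≤ s) : θfun σ s ≤ 1 + √2 / σ * √s := by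
  have h : √(σ ^ 4 / 4 + 2 * σ ^ 2 * s) ≤ σ ^ 2 / 2 + σ * √2 * √s := by
    have hsq : (σ * √2 * √s) ^ 2 = 2 * σ ^ 2 * s := by
      rw [mul_pow, mul_pow, sq_sqrt zero_le_two, sq_sqrt hs]; ring
    rw [sqrt_le_left (by positivity)]
    nlinarith [mul_nonneg (mul_nonneg (pow_pos hσ 3).le (sqrt_nonneg 2)) (sqrt_nonneg s)]
  rw [θfun, div_le_iff₀ (by positivity)]
  have : (1 + √2 / σ * √s) * σ ^ 2 = σ ^ 2 + σ * √2 * √s := by field_simp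
  linarith

lemma tendsto_θfun_sub_mul_atBot {σ c : ℝ} (hσ : 0 < σ) (hc : 0 < c) :
    Tendsto (fun s => θfun σ s - c * s) atTop atBot := by
  refine tendsto_atBot_mono' _ ?_
    (tendsto_atBot_add_const_left _ 1 (tendsto_mul_sqrt_sub_mul_atBot (√2 / σ) hc))
  filter_upwards [eventually_ge_atTop 0] with s hs
  linarith [θfun_le hσ hs]

lemma gfun_le {σ r δ lam : ℝ} (hσ : 0 < σ) (hr : 0 < r) (hδ0 : 0 ≤ δ) (hδ1 : δ ≤ 1)
    (hlam : 0 < r + lam) :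
    gfun σ r δ lam ≤
      δ * θfun σ r + (1 - δ) * (θfun σ (r + lam) - δ * (θfun σ r - 1) / r * (r + lam)) := by
  set a := δ * (θfun σ r - 1) / r
  set b := (1 - δ) * (θfun σ (r + lam) - 1) / (r + lam)
  have ha : 0 ≤ a := div_nonneg (mul_nonneg hδ0 (by linarith [one_lt_θfun hσ hr])) hr.le
  have hb : 0 ≤ b :=
    div_nonneg (mul_nonneg (by linarith) (by linarith [one_lt_θfun hσ hlam])) hlam.le
  have : 0 ≤ δ * r * (a + b) + (1 - δ) * (r + lam) * b := by
    have : 0 ≤ 1 - δ := by linarith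
    positivity
  rw [gfun]
  linarith

theorem stmt15 (σ r δ : ℝ) (hσ : 0 < σ) (hr : 0 < r) (hδ0 : 0 < δ) (hδ1 : δ < 1) :
    Tendsto (gfun σ r δ) atTop atBot ∧
    ∃ lam₂ > 0, ∀ lam > lam₂, gfun σ r δ lam < 0 := by
  have hA : 0 < δ * (θfun σ r - 1) / r :=
    div_pos (mul_pos hδ0 (by linarith [one_lt_θfun hσ hr])) hr
  have hbound : Tendsto (fun lam => δ * θfun σ r + (1 - δ) *
      (θfun σ (r + lam) - δ * (θfun σ r - 1) / r * (r + lam))) atTop atBot :=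
    tendsto_atBot_add_const_left _ _ <| Tendsto.const_mul_atBot (sub_pos.2 hδ1) <|
      (tendsto_θfun_sub_mul_atBot hσ hA).comp (tendsto_atTop_add_const_left _ r tendsto_id)
  have hg : Tendsto (gfun σ r δ) atTop atBot := by
    refine tendsto_atBot_mono' _ ?_ hbound
    filter_upwards [eventually_ge_atTop 0] with lam hlam
    exact gfun_le hσ hr hδ0.le hδ1.le (by linarith)
  obtain ⟨a, ha⟩ := eventually_atTop.1 (hg.eventually (eventually_lt_atBot 0))
  exact ⟨hg, max a 1, by positivity, fun lam hlam => ha lam ((le_max_left a 1).trans hlam.le)⟩
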